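/- Let y be a formal power series in x over ℚ satisfying the Heun equation x(1−4x)(1−16x)·y″ + (1 − 30x + 128x²)·y′ − 2(1−8x)·y = 0, and let G = y². Then θ(θ(θG)) − 2x·((2θ+1)(5θ² + 5θ + 2))(G) + 64x²·((θ+1)³)(G) = 0, where θ is the Euler operator θh = x·h′, for a polynomial P the expression P(θ)(G) means applying the corresponding polynomial expression in θ to G, and multiplication by x or x² is performed after applying the θ-polynomial. -/

import Mathlib

/-!
If `L = a∂² + b∂ + c` annihilates `y`, then `y²` is annihilated by the symmetric square of `L`,
because `Sym²L (y²) = ((4b - 2a')y + 6ay')·Ly + 2ay·(Ly)'` identically. For the Heun operator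
(`a = x(1-4x)(1-16x)`) the Domb operator `E` in `θ` satisfies `a·E = x²·Sym²L`, and `a ≠ 0` can be
cancelled in the domain `ℚ⟦x⟧`.
-/

open PowerSeries

/-- The Euler operator `θh = x·h'` on formal power series over `ℚ`. -/
noncomputable def eulerOp (h : PowerSeries ℚ) : PowerSeries ℚ :=
  X * derivative ℚ h

/-- Shifted Euler operator `(θ + λ)h = θh + λ·h`. -/
noncomputable def eulerOpShift (lam : ℚ) (h : PowerSeries ℚ) : PowerSeries ℚ :=
  eulerOp h + C lam * h

namespace Derivation

variable {A R : Type*} [CommRing A] [CommRing R] [Algebra A R] (D : Derivation A R R)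

theorem map_ofNat (n : ℕ) [n.AtLeastTwo] : D (no_index (OfNat.ofNat n : R)) = 0 := by
  rw [← Nat.cast_ofNat]
  exact D.map_natCast n

def secondOrderOp (a b c y : R) : R :=
  a * D (D y) + b * D y + c * y

/- The symmetric square of `∂² + p∂ + q` is `∂³ + 3p∂² + (2p² + p' + 4q)∂ + (4pq + 2q')`;
this is `a²` times it for `p = b/a`, `q = c/a`. -/
def symSquareOp (a b c G : R) : R :=
  a ^ 2 * D (D (D G)) + 3 * a * b * D (D G)
    + (2 * b ^ 2 + a * D b - D a * b + 4 * a * c) * D G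
    + (4 * b * c + 2 * a * D c - 2 * D a * c) * G

theorem symSquareOp_sq (a b c y : R) :
    D.symSquareOp a b c (y ^ 2) =
      ((4 * b - 2 * D a) * y + 6 * a * D y) * D.secondOrderOp a b c y
        + 2 * a * y * D (D.secondOrderOp a b c y) := by
  simp only [symSquareOp, secondOrderOp, sq y, leibniz, map_add, smul_eq_mul]
  ring

theorem symSquareOp_sq_eq_zero {a b c y : R} (hy : D.secondOrderOp a b c y = 0) :
    D.symSquareOp a b c (y ^ 2) = 0 := by
  rw [symSquareOp_sq, hy, map_zero]
  ring

end Derivation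

noncomputable def dombHeunA : PowerSeries ℚ := X * (1 - 4 * X) * (1 - 16 * X)

noncomputable def dombHeunB : PowerSeries ℚ := 1 - 30 * X + 128 * X ^ 2

noncomputable def dombHeunC : PowerSeries ℚ := -(2 * (1 - 8 * X))

noncomputable def dombEulerOp (G : PowerSeries ℚ) : PowerSeries ℚ :=
  eulerOp (eulerOp (eulerOp G))
    - 2 * X * (2 * eulerOp (5 * eulerOp (eulerOp G) + 5 * eulerOp G + 2 * G)
        + (5 * eulerOp (eulerOp G) + 5 * eulerOp G + 2 * G))
    + 64 * X ^ 2 * eulerOpShift 1 (eulerOpShift 1 (eulerOpShift 1 G))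

theorem dombHeunA_mul_dombEulerOp (G : PowerSeries ℚ) :
    dombHeunA * dombEulerOp G
      = X ^ 2 * (derivative ℚ).symSquareOp dombHeunA dombHeunB dombHeunC G := by
  simp only [dombEulerOp, eulerOpShift, eulerOp, dombHeunA, dombHeunB, dombHeunC,
    Derivation.symSquareOp, map_add, map_sub, map_neg, map_one, map_zero, Derivation.leibniz,
    Derivation.leibniz_pow, Derivation.map_ofNat, Derivation.map_one_eq_zero, derivative_X,
    smul_eq_mul, nsmul_eq_mul]
  ring

theorem dombHeunA_ne_zero : dombHeunA ≠ 0 := by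
  have h4 : (1 - 4 * X : PowerSeries ℚ) ≠ 0 := fun h => by
    simpa using congrArg constantCoeff h
  have h16 : (1 - 16 * X : PowerSeries ℚ) ≠ 0 := fun h => by
    simpa using congrArg constantCoeff h
  exact mul_ne_zero (mul_ne_zero X_ne_zero h4) h16

/-- **Symmetric-square step for the Domb–Heun operator.**
If `y` satisfies the Heun equation
`x(1-4x)(1-16x)·y'' + (1-30x+128x²)·y' - 2(1-8x)·y = 0` and `G = y²`, then
`θ³G - 2x·(2θ+1)(5θ²+5θ+2)·G + 64x²·(θ+1)³·G = 0`. -/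
theorem domb_sym2_euler_equation (y G : PowerSeries ℚ)
    (hy : X * (1 - 4 * X) * (1 - 16 * X) * derivative ℚ (derivative ℚ y)
        + (1 - 30 * X + 128 * X ^ 2) * derivative ℚ y
        - 2 * (1 - 8 * X) * y = 0)
    (hG : G = y ^ 2) :
    eulerOp (eulerOp (eulerOp G))
      - 2 * X * (2 * eulerOp (5 * eulerOp (eulerOp G) + 5 * eulerOp G + 2 * G)
          + (5 * eulerOp (eulerOp G) + 5 * eulerOp G + 2 * G))
      + 64 * X ^ 2 * eulerOpShift 1 (eulerOpShift 1 (eulerOpShift 1 G)) = 0 := by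
  have hHeun : (derivative ℚ).secondOrderOp dombHeunA dombHeunB dombHeunC y = 0 := by
    simp only [Derivation.secondOrderOp, dombHeunA, dombHeunB, dombHeunC]
    linear_combination hy
  have hSym := (derivative ℚ).symSquareOp_sq_eq_zero hHeun
  subst hG
  change dombEulerOp (y ^ 2) = 0
  apply mul_left_cancel₀ dombHeunA_ne_zero
  rw [dombHeunA_mul_dombEulerOp, hSym, mul_zero, mul_zero]
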